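/- Let (X_n)_{n∈ω} be an increasing sequence of subgroups of a group G, and for each n let U_n, V_n ⊆ X_n be sets that are invariant in X_n (xV_nx⁻¹ = V_n and xU_nx⁻¹ = U_n for all x ∈ X_n) and satisfy V_nV_n ⊆ U_n. Then for every m ∈ ω, (V_0V_1⋯V_m)·(V_0V_1⋯V_m) ⊆ U_0U_1⋯U_m. -/

import Mathlib

/-!
`V (m+1)` is invariant under `S (m+1)`, which contains `P = dirProd V m`, so `P` and `V (m+1)`
commute; hence `(P V)(P V) = (P P)(V V)` and induction on `m` applies.
-/

open Set Pointwise

universe u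

/-- The directed partial products `U 0 * U 1 * ⋯ * U m` of a sequence of subsets of a
group. -/
def dirProd {G : Type u} [Group G] (U : ℕ → Set G) : ℕ → Set G
  | 0 => U 0
  | m + 1 => dirProd U m * U (m + 1)

/-- `a * w = (a w a⁻¹) * a` and `w * a = a * (a⁻¹ w a)`, where `a⁻¹ w a ∈ W` because
`w = a w' a⁻¹` for some `w' ∈ W`. -/
lemma Set.commute_of_conj_image_eq {G : Type u} [Group G] {A W : Set G}
    (hW : ∀ a ∈ A, (fun g => a * g * a⁻¹) '' W = W) : Commute A W := by
  ext z
  simp only [Set.mem_mul]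
  constructor
  · rintro ⟨a, ha, w, hw, rfl⟩
    refine ⟨a * w * a⁻¹, ?_, a, ha, by group⟩
    rw [← hW a ha]
    exact ⟨w, hw, rfl⟩
  · rintro ⟨w, hw, a, ha, rfl⟩
    rw [← hW a ha] at hw
    obtain ⟨w', hw', rfl⟩ := hw
    exact ⟨a, ha, w', hw', by group⟩

lemma dirProd_subset_of_monotone {G : Type u} [Group G] {S : ℕ → Subgroup G} (mono : Monotone S)
    {V : ℕ → Set G} (hVsub : ∀ n, V n ⊆ (S n : Set G)) (m : ℕ) :
    dirProd V m ⊆ (S m : Set G) := by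
  induction m with
  | zero => exact hVsub 0
  | succ m ih =>
    rintro z ⟨a, ha, w, hw, rfl⟩
    exact mul_mem (mono m.le_succ (ih ha)) (hVsub (m + 1) hw)

theorem statement18_general {G : Type u} [Group G] (S : ℕ → Subgroup G) (mono : Monotone S)
    (U V : ℕ → Set G)
    (hVsub : ∀ n, V n ⊆ (S n : Set G))
    (hVinvar : ∀ n, ∀ x ∈ S n, (fun g => x * g * x⁻¹) '' V n = V n)
    (hVV : ∀ n, V n * V n ⊆ U n) :
    ∀ m, dirProd V m * dirProd V m ⊆ dirProd U m := by
  intro m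
  induction m with
  | zero => exact hVV 0
  | succ m ih =>
    have hcomm : Commute (dirProd V m) (V (m + 1)) :=
      Set.commute_of_conj_image_eq fun a ha =>
        hVinvar (m + 1) a (mono m.le_succ (dirProd_subset_of_monotone mono hVsub m ha))
    calc dirProd V m * V (m + 1) * (dirProd V m * V (m + 1))
        = dirProd V m * dirProd V m * (V (m + 1) * V (m + 1)) :=
          hcomm.symm.mul_mul_mul_comm _ _
      _ ⊆ dirProd U m * U (m + 1) := mul_subset_mul ih (hVV (m + 1))

/-- Let `(X_n)` be an increasing sequence of subgroups of a group `G`, and for each `n` let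
`U_n, V_n ⊆ X_n` be sets invariant in `X_n` with `V_n V_n ⊆ U_n`.  Then for every `m`,
`(V_0 V_1 ⋯ V_m) (V_0 V_1 ⋯ V_m) ⊆ U_0 U_1 ⋯ U_m`. -/
theorem statement18 {G : Type u} [Group G] (S : ℕ → Subgroup G) (mono : Monotone S)
    (U V : ℕ → Set G)
    (hUsub : ∀ n, U n ⊆ (S n : Set G)) (hVsub : ∀ n, V n ⊆ (S n : Set G))
    (hUinvar : ∀ n, ∀ x ∈ S n, (fun g => x * g * x⁻¹) '' U n = U n)
    (hVinvar : ∀ n, ∀ x ∈ S n, (fun g => x * g * x⁻¹) '' V n = V n)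
    (hVV : ∀ n, V n * V n ⊆ U n) :
    ∀ m, dirProd V m * dirProd V m ⊆ dirProd U m :=
  statement18_general S mono U V hVsub hVinvar hVV
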